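/- arXiv:2301.07245 — 3 statements merged into one kernel-verified Lean document; each statement's English description precedes it below -/
import Mathlib

section
/- The function ARE(β) = (8(β+1)^5/(β²+2)²)·( (2β²+1)/(2(2β+1)^{5/2}) − β²/(4(β+1)³) ) is strictly greater than 1 for all β > 0. -/
open Real

/-- Pitman asymptotic relative efficiency of the Breusch-Pagan β-score LM test. -/
noncomputable def ARE (β : ℝ) : ℝ :=
  (8 * (β + 1) ^ 5 / (β ^ 2 + 2) ^ 2) *
    ((2 * β ^ 2 + 1) / (2 * (2 * β + 1) ^ ((5 : ℝ) / 2)) - β ^ 2 / (4 * (β + 1) ^ 3))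

theorem one_lt_ARE (β : ℝ) (hβ : 0 < β) : 1 < ARE β := by
  have h2β : (0:ℝ) ≤ 2 * β + 1 := by linarith
  set t := Real.sqrt (2 * β + 1) with ht
  have ht2 : t ^ 2 = 2 * β + 1 := Real.sq_sqrt h2β
  have htpos : 1 < t := by
    nlinarith [Real.sqrt_nonneg (2 * β + 1), ht2]
  have hrpow : (2 * β + 1) ^ ((5 : ℝ) / 2) = t ^ 5 := by
    rw [show ((5:ℝ)/2) = (1/2) * (5:ℕ) by norm_num, Real.rpow_mul h2β,
      Real.rpow_natCast, ← Real.sqrt_eq_rpow]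
  have hβt : β = (t ^ 2 - 1) / 2 := by linarith
  have hs : 0 < t - 1 := by linarith
  have key : t ^ 5 * ((t^4 - 2*t^2 + 9)^2 + 2*(t^4 - 1)^2)
      < (t^2 + 1)^5 * (t^4 - 2*t^2 + 3) := by
    nlinarith [pow_pos hs 2, pow_pos hs 3, pow_pos hs 4, pow_pos hs 5,
      pow_pos hs 6, pow_pos hs 7, pow_pos hs 8, pow_pos hs 9, pow_pos hs 10,
      pow_pos hs 11, pow_pos hs 12, pow_pos hs 13, pow_pos hs 14]
  have htp : 0 < t := by linarith
  unfold ARE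
  rw [hrpow, hβt]
  have h1 : (0:ℝ) < ((t^2-1)/2)^2 + 2 := by positivity
  have h2 : (0:ℝ) < (t^2-1)/2 + 1 := by nlinarith
  rw [div_sub_div _ _ (by positivity) (by positivity), div_mul_div_comm,
    lt_div_iff₀ (by positivity), one_mul]
  nlinarith [mul_pos (pow_pos (show (0:ℝ) < t ^ 2 + 1 by positivity) 3)
    (sub_pos.mpr key)]
end

section
/- For β > 0, the quantity D(β) = (2β²+1)/(2(2β+1)^{5/2}) − β²/(4(β+1)³) is strictly positive. -/
open Real

theorem D_pos (β : ℝ) (hβ : 0 < β) :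
    0 < (2 * β ^ 2 + 1) / (2 * (2 * β + 1) ^ ((5 : ℝ) / 2)) - β ^ 2 / (4 * (β + 1) ^ 3) := by
  have hb : (0:ℝ) < 2 * β + 1 := by linarith
  have hx : (0:ℝ) < (2 * β + 1) ^ ((5 : ℝ) / 2) := Real.rpow_pos_of_pos hb _
  have hsplit : (2 * β + 1) ^ ((5 : ℝ) / 2)
      = (2 * β + 1) ^ (2:ℕ) * (2 * β + 1) ^ ((1:ℝ)/2) := by
    rw [← Real.rpow_natCast (2 * β + 1) 2, ← Real.rpow_add hb]
    norm_num
  have hsqrt : (2 * β + 1) ^ ((1:ℝ)/2) ≤ β + 1 := by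
    rw [show (1:ℝ)/2 = (2:ℝ)⁻¹ by norm_num, Real.rpow_inv_le_iff_of_pos hb.le (by linarith) (by norm_num)]
    rw [show ((2:ℝ)) = ((2:ℕ):ℝ) by norm_num, Real.rpow_natCast]
    push_cast
    nlinarith [sq_nonneg β]
  have hle : (2 * β + 1) ^ ((5 : ℝ) / 2) ≤ (2 * β + 1) ^ (2:ℕ) * (β + 1) := by
    rw [hsplit]
    have : (0:ℝ) ≤ (2 * β + 1) ^ (2:ℕ) := by positivity
    nlinarith [Real.rpow_pos_of_pos hb ((1:ℝ)/2)]
  rw [sub_pos, div_lt_div_iff₀ (by positivity) (by positivity)]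
  nlinarith [hx, hle, sq_nonneg β, hβ, mul_pos hβ hβ]
end

section
/- For β ≥ 0 define b₁(β) = (β²+2)/(4(β+1)^{5/2}) and a₁(β) = (2β²+1)/(2(2β+1)^{5/2}) − β²/(4(β+1)³). Then 2 b₁(β)² ≤ a₁(β) for all β ≥ 0, with equality if and only if β = 0. -/
open Real

private lemma rpow_five_halves {t : ℝ} (ht : 0 < t) :
    t ^ ((5 : ℝ) / 2) = t ^ 2 * Real.sqrt t := by
  rw [Real.sqrt_eq_rpow, ← Real.rpow_natCast t 2, ← Real.rpow_add ht]
  norm_num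

private lemma key_poly (β : ℝ) (hβ : 0 ≤ β) :
    (2*β+1)^5 * (3*β^4+4*β^3+6*β^2+4)^2 + β^2 * 96 ≤
      16*(β+1)^10*(2*β^2+1)^2 := by
  have h1 : 0 ≤ β^2 := sq_nonneg β
  have h3 : 0 ≤ β^3 := pow_nonneg hβ 3
  have h4 : 0 ≤ β^4 := pow_nonneg hβ 4
  have h5 : 0 ≤ β^5 := pow_nonneg hβ 5
  have h6 : 0 ≤ β^6 := pow_nonneg hβ 6
  have h7 : 0 ≤ β^7 := pow_nonneg hβ 7
  have h8 : 0 ≤ β^8 := pow_nonneg hβ 8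
  have h9 : 0 ≤ β^9 := pow_nonneg hβ 9
  have h10 : 0 ≤ β^10 := pow_nonneg hβ 10
  have h11 : 0 ≤ β^11 := pow_nonneg hβ 11
  have h12 : 0 ≤ β^12 := pow_nonneg hβ 12
  have h13 : 0 ≤ β^13 := pow_nonneg hβ 13
  have h14 : 0 ≤ β^14 := pow_nonneg hβ 14
  nlinarith [h1, h3, h4, h5, h6, h7, h8, h9, h10, h11, h12, h13, h14]

/-- Key inequality with the square root abstracted: if `s = √(2β+1)` then
`Q · 2(2β+1)² s ≤ (2β²+1)·8(β+1)^5`, with a `β²·(stuff)` gap. -/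
private lemma key_ineq (β s : ℝ) (hβ : 0 ≤ β) (hs2 : s ^ 2 = 2*β+1) (hs0 : 0 ≤ s) :
    (3*β^4+4*β^3+6*β^2+4) * (2*((2*β+1)^2*s)) ≤ (2*β^2+1)*(8*(β+1)^5) := by
  have h1 : 0 ≤ β^2 := sq_nonneg β
  have h3 : 0 ≤ β^3 := pow_nonneg hβ 3
  have h4 : 0 ≤ β^4 := pow_nonneg hβ 4
  have hQ : 0 ≤ 3*β^4+4*β^3+6*β^2+4 := by linarith
  have hA : 0 ≤ (3*β^4+4*β^3+6*β^2+4) * (2*((2*β+1)^2*s)) := by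
    apply mul_nonneg hQ
    have : 0 ≤ (2*β+1)^2 := sq_nonneg _
    nlinarith
  have hB : 0 < (2*β^2+1)*(8*(β+1)^5) := by positivity
  have hsqA : ((3*β^4+4*β^3+6*β^2+4) * (2*((2*β+1)^2*s)))^2
      = 4 * ((2*β+1)^5 * (3*β^4+4*β^3+6*β^2+4)^2) := by
    have : ((3*β^4+4*β^3+6*β^2+4) * (2*((2*β+1)^2*s)))^2
        = (3*β^4+4*β^3+6*β^2+4)^2 * 4 * (2*β+1)^4 * s^2 := by ring
    rw [this, hs2]; ring
  have hP := key_poly β hβ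
  have hsq : ((3*β^4+4*β^3+6*β^2+4) * (2*((2*β+1)^2*s)))^2
      ≤ ((2*β^2+1)*(8*(β+1)^5))^2 := by
    rw [hsqA]
    have : ((2*β^2+1)*(8*(β+1)^5))^2 = 4 * (16*(β+1)^10*(2*β^2+1)^2) := by ring
    rw [this]
    nlinarith [sq_nonneg β]
  nlinarith [hsq, hA, hB]

private lemma key_ineq_strict (β s : ℝ) (hβ : 0 < β) (hs2 : s ^ 2 = 2*β+1) (hs0 : 0 ≤ s) :
    (3*β^4+4*β^3+6*β^2+4) * (2*((2*β+1)^2*s)) < (2*β^2+1)*(8*(β+1)^5) := by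
  have h1 : 0 ≤ β^2 := sq_nonneg β
  have h3 : 0 ≤ β^3 := pow_nonneg hβ.le 3
  have h4 : 0 ≤ β^4 := pow_nonneg hβ.le 4
  have hQ : 0 ≤ 3*β^4+4*β^3+6*β^2+4 := by linarith
  have hA : 0 ≤ (3*β^4+4*β^3+6*β^2+4) * (2*((2*β+1)^2*s)) := by
    apply mul_nonneg hQ
    have : 0 ≤ (2*β+1)^2 := sq_nonneg _
    nlinarith
  have hB : 0 < (2*β^2+1)*(8*(β+1)^5) := by positivity
  have hsqA : ((3*β^4+4*β^3+6*β^2+4) * (2*((2*β+1)^2*s)))^2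
      = 4 * ((2*β+1)^5 * (3*β^4+4*β^3+6*β^2+4)^2) := by
    have : ((3*β^4+4*β^3+6*β^2+4) * (2*((2*β+1)^2*s)))^2
        = (3*β^4+4*β^3+6*β^2+4)^2 * 4 * (2*β+1)^4 * s^2 := by ring
    rw [this, hs2]; ring
  have hP := key_poly β hβ.le
  have hsq : ((3*β^4+4*β^3+6*β^2+4) * (2*((2*β+1)^2*s)))^2
      < ((2*β^2+1)*(8*(β+1)^5))^2 := by
    rw [hsqA]
    have : ((2*β^2+1)*(8*(β+1)^5))^2 = 4 * (16*(β+1)^10*(2*β^2+1)^2) := by ring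
    rw [this]
    nlinarith [mul_pos hβ hβ]
  nlinarith [hsq, hA, hB]

/-- Information-type inequality: with `b₁(β) = (β²+2)/(4(β+1)^{5/2})` and
`a₁(β) = (2β²+1)/(2(2β+1)^{5/2}) − β²/(4(β+1)³)`, we have `2 b₁(β)² ≤ a₁(β)`
for all `β ≥ 0`, with equality iff `β = 0`. -/
theorem information_inequality (β : ℝ) (hβ : 0 ≤ β) :
    2 * ((β ^ 2 + 2) / (4 * (β + 1) ^ ((5 : ℝ) / 2))) ^ 2 ≤
      (2 * β ^ 2 + 1) / (2 * (2 * β + 1) ^ ((5 : ℝ) / 2)) - β ^ 2 / (4 * (β + 1) ^ 3) ∧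
    (2 * ((β ^ 2 + 2) / (4 * (β + 1) ^ ((5 : ℝ) / 2))) ^ 2 =
      (2 * β ^ 2 + 1) / (2 * (2 * β + 1) ^ ((5 : ℝ) / 2)) - β ^ 2 / (4 * (β + 1) ^ 3) ↔
      β = 0) := by
  have hb1 : (0:ℝ) < β + 1 := by linarith
  have hb2 : (0:ℝ) < 2 * β + 1 := by linarith
  rw [rpow_five_halves hb1, rpow_five_halves hb2]
  have hu2 : Real.sqrt (β + 1) ^ 2 = β + 1 := Real.sq_sqrt hb1.le
  have hs2 : Real.sqrt (2 * β + 1) ^ 2 = 2 * β + 1 := Real.sq_sqrt hb2.le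
  have hs0 : 0 ≤ Real.sqrt (2 * β + 1) := Real.sqrt_nonneg _
  have hspos : 0 < Real.sqrt (2 * β + 1) := Real.sqrt_pos.mpr hb2
  have hu0 : 0 < Real.sqrt (β + 1) := Real.sqrt_pos.mpr hb1
  -- rewrite the left side without square roots
  have hL : 2 * ((β ^ 2 + 2) / (4 * ((β + 1) ^ 2 * Real.sqrt (β + 1)))) ^ 2
      = (β ^ 2 + 2) ^ 2 / (8 * (β + 1) ^ 5) := by
    rw [div_pow]
    have hd : (4 * ((β + 1) ^ 2 * Real.sqrt (β + 1))) ^ 2 = 16 * (β + 1) ^ 5 := by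
      have : (4 * ((β + 1) ^ 2 * Real.sqrt (β + 1))) ^ 2
          = 16 * (β + 1) ^ 4 * Real.sqrt (β + 1) ^ 2 := by ring
      rw [this, hu2]; ring
    rw [hd]; field_simp; ring
  rw [hL]
  -- difference identity
  have hdenpos : 0 < 16 * (β + 1) ^ 5 * ((2 * β + 1) ^ 2 * Real.sqrt (2 * β + 1)) := by
    positivity
  have hdiff : ((2 * β ^ 2 + 1) / (2 * ((2 * β + 1) ^ 2 * Real.sqrt (2 * β + 1)))
        - β ^ 2 / (4 * (β + 1) ^ 3)) - (β ^ 2 + 2) ^ 2 / (8 * (β + 1) ^ 5)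
      = ((2*β^2+1)*(8*(β+1)^5)
          - (3*β^4+4*β^3+6*β^2+4) * (2*((2*β+1)^2*Real.sqrt (2*β+1))))
        / (16 * (β + 1) ^ 5 * ((2 * β + 1) ^ 2 * Real.sqrt (2 * β + 1))) := by
    field_simp
    ring
  have hkey := key_ineq β (Real.sqrt (2*β+1)) hβ hs2 hs0
  constructor
  · have hnum : 0 ≤ (2*β^2+1)*(8*(β+1)^5)
        - (3*β^4+4*β^3+6*β^2+4) * (2*((2*β+1)^2*Real.sqrt (2*β+1))) := by linarith
    have := div_nonneg hnum hdenpos.le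
    linarith [hdiff ▸ this]
  · constructor
    · intro heq
      by_contra hne
      have hβpos : 0 < β := lt_of_le_of_ne hβ (Ne.symm hne)
      have hstrict := key_ineq_strict β (Real.sqrt (2*β+1)) hβpos hs2 hs0
      have hnum : 0 < (2*β^2+1)*(8*(β+1)^5)
          - (3*β^4+4*β^3+6*β^2+4) * (2*((2*β+1)^2*Real.sqrt (2*β+1))) := by linarith
      have hpos := div_pos hnum hdenpos
      rw [← hdiff] at hpos
      linarith
    · intro h
      subst h
      norm_num
end
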